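/- (Lemma 2.4, metric of the θ-family) For all a, μ ∈ ℂ and θ ∈ ℝ, ⟨μW(a, e^{iθ}a), conj(μW(a, e^{iθ}a))⟩ = 2|μ|²(1 − 2|a|²cos θ + |a|⁴), where conj is applied componentwise. Consequently the induced conformal factor of the θ-family, λ_θ² = 2⟨f_w, conj(f_w)⟩ with f_w = μW(a, e^{iθ}a), equals 4|μ|²(1 − 2|a|²cos θ + |a|⁴). -/

import Mathlib

open Complex ComplexConjugate

/-!
By bilinearity `μ` only contributes the factor `μ μ̄ = |μ|²`, and for the Weierstrass vector
`⟨W(a,b), conj W(a,b)⟩ = 2|1 − ā b|²`. For `b = e^{iθ}a` this is `2|1 − |a|² e^{iθ}|²`, and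
`|1 − r e^{iθ}|² = 1 − 2r cos θ + r²`.
-/

/-- The Weierstrass vector `W(a,b) = (a+b, 1+ab, i(1-ab), a-b) ∈ ℂ⁴`. -/
noncomputable def W (a b : ℂ) : Fin 4 → ℂ := ![a + b, 1 + a * b, I * (1 - a * b), a - b]

/-- The complex-bilinear Lorentz form on ℂ⁴ (no conjugation). -/
noncomputable def lprod (z y : Fin 4 → ℂ) : ℂ :=
  -(z 0 * y 0) + z 1 * y 1 + z 2 * y 2 + z 3 * y 3

lemma lprod_smul_smul (c d : ℂ) (z y : Fin 4 → ℂ) :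
    lprod (c • z) (d • y) = c * d * lprod z y := by
  simp only [lprod, Pi.smul_apply, smul_eq_mul]
  ring

lemma lprod_self_conj_smul (μ : ℂ) (z : Fin 4 → ℂ) :
    lprod (μ • z) (fun i => conj ((μ • z) i)) = (‖μ‖ : ℂ) ^ 2 * lprod z (fun i => conj (z i)) := by
  have hconj : (fun i => conj ((μ • z) i)) = conj μ • fun i => conj (z i) := by
    ext i; simp
  rw [hconj, lprod_smul_smul, mul_conj']

lemma lprod_W_conj_W (a b : ℂ) :
    lprod (W a b) (fun i => conj (W a b i)) = 2 * ((‖1 - conj a * b‖ ^ 2 : ℝ) : ℂ) := by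
  rw [ofReal_pow, ← mul_conj']
  simp only [lprod, W, Matrix.cons_val_zero, Matrix.cons_val_one, Matrix.cons_val_two,
    Matrix.cons_val_three, Matrix.head_cons, Matrix.tail_cons, map_add, map_sub, map_mul,
    map_one, conj_I, conj_conj]
  linear_combination (-(1 - a * b) * (1 - conj a * conj b)) * I_mul_I

lemma norm_one_sub_ofReal_mul_exp_sq (r θ : ℝ) :
    ‖1 - r * exp (θ * I)‖ ^ 2 = 1 - 2 * r * Real.cos θ + r ^ 2 := by
  rw [Complex.sq_norm, normSq_apply]
  simp only [sub_re, one_re, mul_re, ofReal_re, exp_ofReal_mul_I_re, ofReal_im,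
    exp_ofReal_mul_I_im, zero_mul, sub_zero, sub_im, one_im, mul_im, add_zero, zero_sub, mul_neg,
    neg_mul, neg_neg]
  nlinarith [Real.sin_sq_add_cos_sq θ]

theorem stmt_8 (a μ : ℂ) (θ : ℝ) (fw : Fin 4 → ℂ)
    (hfw : fw = μ • W a (Complex.exp (θ * I) * a)) :
    lprod fw (fun i => conj (fw i)) =
      2 * (‖μ‖ : ℂ) ^ 2 *
        (1 - 2 * (‖a‖ : ℂ) ^ 2 * (Real.cos θ : ℂ) + (‖a‖ : ℂ) ^ 4) ∧
    2 * lprod fw (fun i => conj (fw i)) =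
      4 * (‖μ‖ : ℂ) ^ 2 *
        (1 - 2 * (‖a‖ : ℂ) ^ 2 * (Real.cos θ : ℂ) + (‖a‖ : ℂ) ^ 4) := by
  have hprod : conj a * (exp (θ * I) * a) = ((‖a‖ ^ 2 : ℝ) : ℂ) * exp (θ * I) := by
    rw [ofReal_pow, ← conj_mul']; ring
  have key : lprod fw (fun i => conj (fw i)) =
      2 * (‖μ‖ : ℂ) ^ 2 * (1 - 2 * (‖a‖ : ℂ) ^ 2 * (Real.cos θ : ℂ) + (‖a‖ : ℂ) ^ 4) := by
    rw [hfw, lprod_self_conj_smul, lprod_W_conj_W, hprod, norm_one_sub_ofReal_mul_exp_sq]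
    push_cast
    ring
  exact ⟨key, by rw [key]; ring⟩
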